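/- arXiv:2505.07499 — 2 statements merged into one kernel-verified Lean document; each statement's English description precedes it below -/
import Mathlib

section
/- Let f,g:(0,ε*)→ℝ be C² with |f''|,|g''| ≤ M, and suppose |f'(ε) − g'(ε)| ≥ v > 0 for all ε in an interval J ⊂ (0,ε*) centered at ε₀ of radius r, where r ≤ v/(4M). If |f(ε₀) − g(ε₀)| < δ, then the measure of {ε∈J : |f(ε)−g(ε)| < δ} is at most 4δ/v + (the measure of a single interval of length 4δ/v), i.e., bounded by C·δ/v for an absolute constant C. -/
open MeasureTheory

/-- transversality measure estimate. If two C² functions have second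
derivatives bounded by `M`, derivative gap `|f'−g'| ≥ v` on an interval `J` of radius
`r ≤ v/(4M)` centered at `ε₀` inside `(0,ε*)`, and `|f(ε₀)−g(ε₀)| < δ`, then the
measure of the near-collision set `{ε∈J : |f(ε)−g(ε)| < δ}` is at most `C·δ/v` for
an absolute constant `C`. -/
theorem stmt_9 :
    ∃ C > (0:ℝ), ∀ (f g : ℝ → ℝ) (M v r ε₀ δ εstar : ℝ),
      ContDiff ℝ 2 f → ContDiff ℝ 2 g →
      0 < M → 0 < v → 0 < r → 0 < δ → 0 < εstar →
      Set.Icc (ε₀ - r) (ε₀ + r) ⊆ Set.Ioo 0 εstar →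
      (∀ ε ∈ Set.Icc (ε₀ - r) (ε₀ + r),
        |deriv (deriv f) ε| ≤ M ∧ |deriv (deriv g) ε| ≤ M) →
      (∀ ε ∈ Set.Icc (ε₀ - r) (ε₀ + r), v ≤ |deriv f ε - deriv g ε|) →
      r ≤ v / (4 * M) →
      |f ε₀ - g ε₀| < δ →
      volume {ε ∈ Set.Icc (ε₀ - r) (ε₀ + r) | |f ε - g ε| < δ}
        ≤ ENNReal.ofReal (C * δ / v) := by
  refine ⟨4, by norm_num, ?_⟩
  intro f g M v r ε₀ δ εstar hf hg hM hv hr hδ hεs hsub hsnd hgap hrv hε₀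
  set S := {ε ∈ Set.Icc (ε₀ - r) (ε₀ + r) | |f ε - g ε| < δ} with hS
  have hdf : Differentiable ℝ f := hf.differentiable (by norm_num)
  have hdg : Differentiable ℝ g := hg.differentiable (by norm_num)
  have hdh : Differentiable ℝ (fun x => f x - g x) := hdf.sub hdg
  -- key: any two points of S are within 2δ/v of each other
  have key : ∀ x ∈ S, ∀ y ∈ S, |x - y| ≤ 2 * δ / v := by
    intro x hx y hy
    rcases hx with ⟨hxJ, hxδ⟩
    rcases hy with ⟨hyJ, hyδ⟩
    rcases lt_trichotomy x y with hlt | heq | hgt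
    · obtain ⟨c, hc, hc'⟩ := exists_deriv_eq_slope (fun t => f t - g t) hlt
        (hdh.continuous.continuousOn) (hdh.differentiableOn)
      have hcJ : c ∈ Set.Icc (ε₀ - r) (ε₀ + r) :=
        ⟨le_trans hxJ.1 hc.1.le, le_trans hc.2.le hyJ.2⟩
      have hderiv : deriv (fun t => f t - g t) c = deriv f c - deriv g c :=
        deriv_sub (hdf c) (hdg c)
      have h1 : v * |y - x| ≤ |(f y - g y) - (f x - g x)| := by
        have := hgap c hcJ
        rw [← hderiv] at this
        have hne : y - x ≠ 0 := sub_ne_zero.mpr hlt.ne'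
        have : v * |y - x| ≤ |deriv (fun t => f t - g t) c| * |y - x| :=
          mul_le_mul_of_nonneg_right this (abs_nonneg _)
        calc v * |y - x| ≤ |deriv (fun t => f t - g t) c| * |y - x| := this
          _ = |deriv (fun t => f t - g t) c * (y - x)| := (abs_mul _ _).symm
          _ = |(f y - g y) - (f x - g x)| := by
              rw [hc', div_mul_cancel₀ _ hne]
      have h2 : |(f y - g y) - (f x - g x)| < 2 * δ := by
        calc |(f y - g y) - (f x - g x)| ≤ |f y - g y| + |f x - g x| := abs_sub _ _
          _ < δ + δ := add_lt_add hyδ hxδ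
          _ = 2 * δ := by ring
      have : v * |y - x| ≤ 2 * δ := le_of_lt (lt_of_le_of_lt h1 h2)
      rw [abs_sub_comm]
      rw [le_div_iff₀ hv]
      linarith [this]
    · simp [heq, le_div_iff₀ hv]; positivity
    · obtain ⟨c, hc, hc'⟩ := exists_deriv_eq_slope (fun t => f t - g t) hgt
        (hdh.continuous.continuousOn) (hdh.differentiableOn)
      have hcJ : c ∈ Set.Icc (ε₀ - r) (ε₀ + r) :=
        ⟨le_trans hyJ.1 hc.1.le, le_trans hc.2.le hxJ.2⟩
      have hderiv : deriv (fun t => f t - g t) c = deriv f c - deriv g c :=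
        deriv_sub (hdf c) (hdg c)
      have h1 : v * |x - y| ≤ |(f x - g x) - (f y - g y)| := by
        have := hgap c hcJ
        rw [← hderiv] at this
        have hne : x - y ≠ 0 := sub_ne_zero.mpr hgt.ne'
        have : v * |x - y| ≤ |deriv (fun t => f t - g t) c| * |x - y| :=
          mul_le_mul_of_nonneg_right this (abs_nonneg _)
        calc v * |x - y| ≤ |deriv (fun t => f t - g t) c| * |x - y| := this
          _ = |deriv (fun t => f t - g t) c * (x - y)| := (abs_mul _ _).symm
          _ = |(f x - g x) - (f y - g y)| := by
              rw [hc', div_mul_cancel₀ _ hne]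
      have h2 : |(f x - g x) - (f y - g y)| < 2 * δ := by
        calc |(f x - g x) - (f y - g y)| ≤ |f x - g x| + |f y - g y| := abs_sub _ _
          _ < δ + δ := add_lt_add hxδ hyδ
          _ = 2 * δ := by ring
      have : v * |x - y| ≤ 2 * δ := le_of_lt (lt_of_le_of_lt h1 h2)
      rw [le_div_iff₀ hv]
      linarith [this]
  rcases Set.eq_empty_or_nonempty S with hSe | ⟨x₀, hx₀⟩
  · rw [hSe]; simp
  · have hsubI : S ⊆ Set.Icc (x₀ - 2 * δ / v) (x₀ + 2 * δ / v) := by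
      intro x hx
      have := key x hx x₀ hx₀
      rw [abs_sub_le_iff] at this
      constructor <;> linarith [this.1, this.2]
    calc volume S ≤ volume (Set.Icc (x₀ - 2 * δ / v) (x₀ + 2 * δ / v)) :=
          measure_mono hsubI
      _ = ENNReal.ofReal (4 * δ / v) := by
          rw [Real.volume_Icc]; ring_nf
      _ ≤ ENNReal.ofReal (4 * δ / v) := le_refl _
end

section
/- Let α≥1, κ∈(1,2], T>0, and let Δ:[0,∞)→[1,∞) be an α-approximation function with (1/log κ)·∫_T^∞ log Δ(t)/t^{1+1/α} dt ≤ a. Define for r̄≥0, n≥1, η>0: Γ_{r̄,n}(η) = sup_{t≥0} (1+t)^{r̄} Δ(t)^n e^{−η t^{1/α}}. Then there exists c>0 (with η = n·a + r̄·c, where c = (1/log κ)∫_T^∞ log(1+t)/t^{1+1/α} dt) such that Γ_{r̄,n}(η) ≤ e^{η T^{1/α}}. -/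
open Real MeasureTheory


lemma key_bound (α T : ℝ) (hα : 1 ≤ α) (hT : 0 < T) (g : ℝ → ℝ)
    (hmono : MonotoneOn g (Set.Ici T))
    (hg0 : 0 ≤ g T)
    (hint : IntegrableOn (fun t => g t / t ^ (1 + 1 / α)) (Set.Ici T))
    (u : ℝ) (hu : T ≤ u) :
    g u * (α / u ^ (1 / α)) ≤ ∫ t in Set.Ici T, g t / t ^ (1 + 1 / α) := by
  have hα0 : (0 : ℝ) < α := lt_of_lt_of_le one_pos hα
  have hexp : -(1 + 1 / α) < -1 := by
    have : (0:ℝ) < 1 / α := by positivity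
    linarith
  have hu0 : 0 < u := lt_of_lt_of_le hT hu
  have hnonneg : ∀ t ∈ Set.Ici T, 0 ≤ g t / t ^ (1 + 1 / α) := by
    intro t ht
    have ht0 : 0 < t := lt_of_lt_of_le hT ht
    have : 0 ≤ g t := hg0.trans (hmono (Set.self_mem_Ici) ht ht)
    positivity
  have hsub : Set.Ici u ⊆ Set.Ici T := Set.Ici_subset_Ici.mpr hu
  have hintu : IntegrableOn (fun t => g t / t ^ (1 + 1 / α)) (Set.Ici u) :=
    hint.mono_set hsub
  have step1 : (∫ t in Set.Ici u, g t / t ^ (1 + 1 / α))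
      ≤ ∫ t in Set.Ici T, g t / t ^ (1 + 1 / α) := by
    apply setIntegral_mono_set hint
    · exact (ae_restrict_iff' measurableSet_Ici).mpr (Filter.Eventually.of_forall hnonneg)
    · exact Filter.Eventually.of_forall hsub
  have hintc : IntegrableOn (fun t : ℝ => g u * t ^ (-(1 + 1 / α))) (Set.Ici u) := by
    rw [integrableOn_Ici_iff_integrableOn_Ioi]
    exact (integrableOn_Ioi_rpow_of_lt hexp hu0).const_mul _
  have step2 : (∫ t in Set.Ici u, g u * t ^ (-(1 + 1 / α)))
      ≤ ∫ t in Set.Ici u, g t / t ^ (1 + 1 / α) := by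
    apply setIntegral_mono_on hintc hintu measurableSet_Ici
    intro t ht
    have ht0 : 0 < t := lt_of_lt_of_le hu0 ht
    rw [Real.rpow_neg ht0.le, ← div_eq_mul_inv]
    apply div_le_div_of_nonneg_right ?_ (by positivity)
    exact hmono (Set.mem_Ici.mpr hu) (Set.mem_Ici.mpr (hu.trans ht)) ht
  have compute : (∫ t in Set.Ici u, g u * t ^ (-(1 + 1 / α))) = g u * (α / u ^ (1 / α)) := by
    rw [integral_Ici_eq_integral_Ioi, MeasureTheory.integral_const_mul,
      integral_Ioi_rpow_of_lt hexp hu0]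
    have h1 : -(1 + 1 / α) + 1 = -(1 / α) := by ring
    rw [h1, Real.rpow_neg hu0.le]
    have h1α : (1:ℝ)/α ≠ 0 := by positivity
    field_simp
  calc g u * (α / u ^ (1 / α)) = ∫ t in Set.Ici u, g u * t ^ (-(1 + 1 / α)) := compute.symm
    _ ≤ ∫ t in Set.Ici u, g t / t ^ (1 + 1 / α) := step2
    _ ≤ _ := step1

lemma bound_from_integral (α T κ a : ℝ) (hα : 1 ≤ α) (hT : 0 < T)
    (hκ : 1 < κ) (hκ2 : κ ≤ 2)
    (g : ℝ → ℝ) (hmono : MonotoneOn g (Set.Ici T)) (hg0 : 0 ≤ g T)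
    (hint : IntegrableOn (fun t => g t / t ^ (1 + 1 / α)) (Set.Ici T))
    (ha : (1 / Real.log κ) * (∫ t in Set.Ici T, g t / t ^ (1 + 1 / α)) ≤ a) :
    ∀ u, T ≤ u → g u ≤ a * u ^ (1 / α) := by
  intro u hu
  have hα0 : (0 : ℝ) < α := lt_of_lt_of_le one_pos hα
  have hu0 : 0 < u := lt_of_lt_of_le hT hu
  have hP : (0:ℝ) < u ^ (1 / α) := Real.rpow_pos_of_pos hu0 _
  have hgu : 0 ≤ g u := hg0.trans (hmono Set.self_mem_Ici hu hu)
  have hlκ : 0 < Real.log κ := Real.log_pos hκ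
  have hlκ1 : Real.log κ < 1 := by
    have h2 : Real.log κ ≤ Real.log 2 := Real.log_le_log (by linarith) hκ2
    have := Real.log_two_lt_d9
    linarith
  have hI : g u * (α / u ^ (1 / α)) ≤ ∫ t in Set.Ici T, g t / t ^ (1 + 1 / α) :=
    key_bound α T hα hT g hmono hg0 hint u hu
  have hInn : 0 ≤ ∫ t in Set.Ici T, g t / t ^ (1 + 1 / α) := by
    apply setIntegral_nonneg measurableSet_Ici
    intro t ht
    have ht0 : 0 < t := lt_of_lt_of_le hT ht
    have : 0 ≤ g t := hg0.trans (hmono Set.self_mem_Ici ht ht)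
    positivity
  have hmul : (∫ t in Set.Ici T, g t / t ^ (1 + 1 / α))
      ≤ (1 / Real.log κ) * (∫ t in Set.Ici T, g t / t ^ (1 + 1 / α)) := by
    have h1 : (1:ℝ) ≤ 1 / Real.log κ := by
      rw [le_div_iff₀ hlκ]
      linarith
    nlinarith
  have hfin : g u * (α / u ^ (1 / α)) ≤ a := le_trans hI (le_trans hmul ha)
  have hstep : g u / u ^ (1 / α) ≤ g u * (α / u ^ (1 / α)) := by
    rw [div_eq_mul_inv, mul_div_assoc']
    apply div_le_div_of_nonneg_right ?_ hP.le
    nlinarith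
  rw [← div_le_iff₀ hP] at *
  exact le_trans hstep hfin

lemma log_one_add_integrable (α T : ℝ) (hα : 1 ≤ α) (hT : 0 < T) :
    IntegrableOn (fun t => Real.log (1 + t) / t ^ (1 + 1 / α)) (Set.Ici T) := by
  have hα0 : (0 : ℝ) < α := lt_of_lt_of_le one_pos hα
  set p : ℝ := 1 / (2 * α) with hp
  have hp0 : 0 < p := by positivity
  set C : ℝ := 2 * α * (1 + 1 / T) ^ p with hC
  have hexp : p - (1 + 1 / α) < -1 := by
    have h1 : p < 1 / α := one_div_lt_one_div_of_lt hα0 (by linarith)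
    linarith
  have hgint : IntegrableOn (fun t : ℝ => C * t ^ (p - (1 + 1 / α))) (Set.Ici T) := by
    rw [integrableOn_Ici_iff_integrableOn_Ioi]
    exact (integrableOn_Ioi_rpow_of_lt hexp hT).const_mul _
  apply Integrable.mono' hgint
  · apply ContinuousOn.aestronglyMeasurable ?_ measurableSet_Ici
    apply ContinuousOn.div
    · apply ContinuousOn.log (by fun_prop)
      intro t ht
      have : 0 < t := lt_of_lt_of_le hT ht
      positivity
    · intro t ht
      exact (Real.continuousAt_rpow_const t _ (Or.inl (ne_of_gt (lt_of_lt_of_le hT ht)))).continuousWithinAt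
    · intro t ht
      have : 0 < t := lt_of_lt_of_le hT ht
      positivity
  · rw [ae_restrict_iff' measurableSet_Ici]
    apply Filter.Eventually.of_forall
    intro t ht
    have ht0 : 0 < t := lt_of_lt_of_le hT ht
    have h1t : (0:ℝ) < 1 + t := by linarith
    have hlog0 : 0 ≤ Real.log (1 + t) := Real.log_nonneg (by linarith)
    rw [Real.norm_eq_abs, abs_of_nonneg (by positivity)]
    have hlog : Real.log (1 + t) ≤ 2 * α * ((1 + 1 / T) ^ p * t ^ p) := by
      have e1 : Real.log (1 + t) = 2 * α * Real.log ((1 + t) ^ p) := by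
        rw [Real.log_rpow h1t, hp]
        field_simp
      have e2 : Real.log ((1 + t) ^ p) ≤ (1 + t) ^ p :=
        Real.log_le_self (by positivity)
      have e3 : (1 + t) ^ p ≤ (1 + 1 / T) ^ p * t ^ p := by
        rw [← Real.mul_rpow (by positivity) ht0.le]
        apply Real.rpow_le_rpow h1t.le ?_ hp0.le
        rw [add_mul, one_mul]
        have h2 : (1:ℝ) ≤ 1 / T * t := by
          rw [one_div, inv_mul_eq_div]
          exact (one_le_div hT).mpr ht
        linarith
      nlinarith
    calc Real.log (1 + t) / t ^ (1 + 1 / α)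
        ≤ 2 * α * ((1 + 1 / T) ^ p * t ^ p) / t ^ (1 + 1 / α) := by
          apply div_le_div_of_nonneg_right hlog (by positivity)
      _ = C * t ^ (p - (1 + 1 / α)) := by
          rw [Real.rpow_sub ht0, hC]
          ring

/-- Lemma 7.1: for an α-approximation function Δ with
`(1/log κ)∫_T^∞ log Δ(t)/t^{1+1/α} dt ≤ a`, setting
`c = (1/log κ)∫_T^∞ log(1+t)/t^{1+1/α} dt` and `η = n·a + r̄·c`, one has
`Γ_{r̄,n}(η) = sup_{t≥0} (1+t)^{r̄} Δ(t)^n e^{−η t^{1/α}} ≤ e^{η T^{1/α}}`. -/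
theorem stmt_15 (α ς : ℝ) (hα : 1 ≤ α) (hς : 0 < ς)
    (κ T a : ℝ) (hκ : 1 < κ) (hκ2 : κ ≤ 2) (hT : 0 < T)
    (Δ : ℝ → ℝ)
    (hΔcont : ContinuousOn Δ (Set.Ici 0))
    (hΔmono : StrictMonoOn Δ (Set.Ici 0))
    (hΔone : ∀ t, 0 ≤ t → 1 ≤ Δ t)
    (hΔunbdd : ∀ M : ℝ, ∃ t, 0 ≤ t ∧ M < Δ t)
    (hΔdec : AntitoneOn (fun t => Real.log (Δ t) / t ^ (1 / α)) (Set.Ioi 0))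
    (hΔint : IntegrableOn (fun t => Real.log (Δ t) / t ^ (1 + 1 / α)) (Set.Ici T))
    (hinta : (1 / Real.log κ) *
      (∫ t in Set.Ici T, Real.log (Δ t) / t ^ (1 + 1 / α)) ≤ a)
    (r n : ℝ) (hr : 0 ≤ r) (hn : 1 ≤ n)
    (c η : ℝ)
    (hc : c = (1 / Real.log κ) *
      (∫ t in Set.Ici T, Real.log (1 + t) / t ^ (1 + 1 / α)))
    (hη : η = n * a + r * c) :
    ∀ t, 0 ≤ t →
      (1 + t) ^ r * (Δ t) ^ n * Real.exp (-η * t ^ (1 / α))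
        ≤ Real.exp (η * T ^ (1 / α)) := by
  have hα0 : (0 : ℝ) < α := lt_of_lt_of_le one_pos hα
  have hlκ : 0 < Real.log κ := Real.log_pos hκ
  -- monotonicity of log ∘ Δ on Ici T
  have hΔmonoT : MonotoneOn (fun t => Real.log (Δ t)) (Set.Ici T) := by
    intro x hx y hy hxy
    have hx0 : (0:ℝ) ≤ x := hT.le.trans hx
    have hy0 : (0:ℝ) ≤ y := hT.le.trans hy
    exact Real.log_le_log (lt_of_lt_of_le one_pos (hΔone x hx0))
      ((hΔmono.monotoneOn) hx0 hy0 hxy)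
  have hLmonoT : MonotoneOn (fun t => Real.log (1 + t)) (Set.Ici T) := by
    intro x hx y hy hxy
    have : (0:ℝ) < 1 + x := by have := hT.le.trans hx; linarith
    exact Real.log_le_log this (by linarith)
  -- the two pointwise bounds
  have haT : ∀ u, T ≤ u → Real.log (Δ u) ≤ a * u ^ (1 / α) :=
    bound_from_integral α T κ a hα hT hκ hκ2 _ hΔmonoT
      (Real.log_nonneg (hΔone T hT.le)) hΔint hinta
  have hcT : ∀ u, T ≤ u → Real.log (1 + u) ≤ c * u ^ (1 / α) :=
    bound_from_integral α T κ c hα hT hκ hκ2 _ hLmonoT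
      (Real.log_nonneg (by linarith)) (log_one_add_integrable α T hα hT) hc.ge
  -- nonnegativity of a, c, η
  have hIa : 0 ≤ ∫ t in Set.Ici T, Real.log (Δ t) / t ^ (1 + 1 / α) := by
    apply setIntegral_nonneg measurableSet_Ici
    intro t ht
    have ht0 : 0 < t := lt_of_lt_of_le hT ht
    have := Real.log_nonneg (hΔone t ht0.le)
    positivity
  have hIc : 0 ≤ ∫ t in Set.Ici T, Real.log (1 + t) / t ^ (1 + 1 / α) := by
    apply setIntegral_nonneg measurableSet_Ici
    intro t ht
    have ht0 : 0 < t := lt_of_lt_of_le hT ht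
    have := Real.log_nonneg (show (1:ℝ) ≤ 1 + t by linarith)
    positivity
  have ha0 : 0 ≤ a := le_trans (by positivity) hinta
  have hc0 : 0 ≤ c := hc ▸ (by positivity)
  have hη0 : 0 ≤ η := by rw [hη]; positivity
  intro t ht
  have h1t : (0:ℝ) < 1 + t := by linarith
  have hΔt1 : (1:ℝ) ≤ Δ t := hΔone t ht
  have hΔt0 : (0:ℝ) < Δ t := lt_of_lt_of_le one_pos hΔt1
  have hTp : (0:ℝ) ≤ T ^ (1 / α) := Real.rpow_nonneg hT.le _
  have htp : (0:ℝ) ≤ t ^ (1 / α) := Real.rpow_nonneg ht _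
  rcases le_total t T with hcase | hcase
  · -- small t : bound everything by its value at T
    have h1 : (1 + t) ^ r ≤ Real.exp (r * (c * T ^ (1 / α))) := by
      calc (1 + t) ^ r ≤ (1 + T) ^ r :=
            Real.rpow_le_rpow h1t.le (by linarith) hr
        _ = Real.exp (Real.log (1 + T) * r) := Real.rpow_def_of_pos (by linarith) r
        _ ≤ Real.exp (r * (c * T ^ (1 / α))) := by
            apply Real.exp_le_exp.mpr
            rw [mul_comm]
            exact mul_le_mul_of_nonneg_left (hcT T le_rfl) hr
    have h2 : (Δ t) ^ n ≤ Real.exp (n * (a * T ^ (1 / α))) := by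
      calc (Δ t) ^ n ≤ (Δ T) ^ n :=
            Real.rpow_le_rpow hΔt0.le (hΔmono.monotoneOn ht (hT.le) hcase) (by linarith)
        _ = Real.exp (Real.log (Δ T) * n) :=
            Real.rpow_def_of_pos (lt_of_lt_of_le one_pos (hΔone T hT.le)) n
        _ ≤ Real.exp (n * (a * T ^ (1 / α))) := by
            apply Real.exp_le_exp.mpr
            rw [mul_comm]
            exact mul_le_mul_of_nonneg_left (haT T le_rfl) (by linarith)
    have h3 : Real.exp (-η * t ^ (1 / α)) ≤ 1 := by
      apply Real.exp_le_one_iff.mpr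
      nlinarith
    have hinner : (1 + t) ^ r * (Δ t) ^ n
        ≤ Real.exp (r * (c * T ^ (1 / α))) * Real.exp (n * (a * T ^ (1 / α))) :=
      mul_le_mul h1 h2 (Real.rpow_nonneg hΔt0.le n) (Real.exp_pos _).le
    calc (1 + t) ^ r * (Δ t) ^ n * Real.exp (-η * t ^ (1 / α))
        ≤ Real.exp (r * (c * T ^ (1 / α))) * Real.exp (n * (a * T ^ (1 / α))) * 1 :=
          mul_le_mul hinner h3 (Real.exp_pos _).le (by positivity)
      _ = Real.exp (η * T ^ (1 / α)) := by
          rw [mul_one, ← Real.exp_add]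
          congr 1
          rw [hη]; ring
  · -- large t : exponential bounds at t itself
    have h1 : (1 + t) ^ r ≤ Real.exp (r * (c * t ^ (1 / α))) := by
      calc (1 + t) ^ r = Real.exp (Real.log (1 + t) * r) := Real.rpow_def_of_pos h1t r
        _ ≤ Real.exp (r * (c * t ^ (1 / α))) := by
            apply Real.exp_le_exp.mpr
            rw [mul_comm]
            exact mul_le_mul_of_nonneg_left (hcT t hcase) hr
    have h2 : (Δ t) ^ n ≤ Real.exp (n * (a * t ^ (1 / α))) := by
      calc (Δ t) ^ n = Real.exp (Real.log (Δ t) * n) := Real.rpow_def_of_pos hΔt0 n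
        _ ≤ Real.exp (n * (a * t ^ (1 / α))) := by
            apply Real.exp_le_exp.mpr
            rw [mul_comm]
            exact mul_le_mul_of_nonneg_left (haT t hcase) (by linarith)
    have hinner : (1 + t) ^ r * (Δ t) ^ n
        ≤ Real.exp (r * (c * t ^ (1 / α))) * Real.exp (n * (a * t ^ (1 / α))) :=
      mul_le_mul h1 h2 (Real.rpow_nonneg hΔt0.le n) (Real.exp_pos _).le
    calc (1 + t) ^ r * (Δ t) ^ n * Real.exp (-η * t ^ (1 / α))
        ≤ Real.exp (r * (c * t ^ (1 / α))) * Real.exp (n * (a * t ^ (1 / α)))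
            * Real.exp (-η * t ^ (1 / α)) :=
          mul_le_mul hinner le_rfl (Real.exp_pos _).le (by positivity)
      _ = Real.exp (r * (c * t ^ (1 / α)) + n * (a * t ^ (1 / α)) + -η * t ^ (1 / α)) := by
          rw [Real.exp_add, Real.exp_add]
      _ = 1 := by
          rw [show r * (c * t ^ (1 / α)) + n * (a * t ^ (1 / α)) + -η * t ^ (1 / α) = 0 by
            rw [hη]; ring, Real.exp_zero]
      _ ≤ Real.exp (η * T ^ (1 / α)) := by
          rw [← Real.exp_zero]
          exact Real.exp_le_exp.mpr (by positivity)
end
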